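/- Let a Mauldin–Williams graph coincide with its invariant list, with invariant set K and coding map π : E^∞ → K. If the Mauldin–Williams graph is totally disconnected, then π is a homeomorphism from E^∞ (with the subspace topology of the product topology on E^ℕ) onto K. -/
import Mathlib


/-- A finite directed graph with surjective range and source maps
(no sources and no sinks). -/
structure DirGraph (V E : Type*) where
  r : E → V
  s : E → V
  r_surj : Function.Surjective r
  s_surj : Function.Surjective s

/-- A Mauldin–Williams graph over the directed graph `G`.  The compact metric
spaces `T v` are realized as pairwise disjoint nonempty compact subsets of an
ambient metric space `X` (modelling their disjoint union), and for each edge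
`e` the map `φ e : T (r e) → T (s e)` satisfies
`c₁ * dist x y ≤ dist (φ e x) (φ e y) ≤ c * dist x y` with `0 < c₁ ≤ c < 1`. -/
structure MWGraph {V E : Type*} (G : DirGraph V E) (X : Type*) [MetricSpace X] where
  T : V → Set X
  φ : E → X → X
  c₁ : ℝ
  c : ℝ
  c₁_pos : 0 < c₁
  c₁_le_c : c₁ ≤ c
  c_lt_one : c < 1
  T_compact : ∀ v, IsCompact (T v)
  T_nonempty : ∀ v, (T v).Nonempty
  T_disjoint : ∀ v w, v ≠ w → Disjoint (T v) (T w)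
  maps_to : ∀ e, Set.MapsTo (φ e) (T (G.r e)) (T (G.s e))
  lower : ∀ e, ∀ x ∈ T (G.r e), ∀ y ∈ T (G.r e), c₁ * dist x y ≤ dist (φ e x) (φ e y)
  upper : ∀ e, ∀ x ∈ T (G.r e), ∀ y ∈ T (G.r e), dist (φ e x) (φ e y) ≤ c * dist x y

namespace MWGraph

variable {V E : Type*} {G : DirGraph V E} {X : Type*} [MetricSpace X]

/-- `K : V → Set X` is an invariant list for the Mauldin–Williams graph `M`:
a family of nonempty compact sets `K v ⊆ T v` with
`K v = ⋃_{e ∈ E, s e = v} φ e '' K (r e)` for every vertex `v`. -/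
def IsInvariantList (M : MWGraph G X) (K : V → Set X) : Prop :=
  (∀ v, K v ⊆ M.T v) ∧ (∀ v, IsCompact (K v)) ∧ (∀ v, (K v).Nonempty) ∧
    (∀ v, K v = ⋃ e ∈ {e : E | G.s e = v}, M.φ e '' K (G.r e))

/-- The Mauldin–Williams graph coincides with its own invariant list,
i.e. `(T v)_{v ∈ V}` is itself the invariant list. -/
def SelfInvariant (M : MWGraph G X) : Prop :=
  ∀ v, M.T v = ⋃ e ∈ {e : E | G.s e = v}, M.φ e '' M.T (G.r e)

/-- The invariant set: the (disjoint) union of the sets of the family. -/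
def KK (M : MWGraph G X) : Set X := ⋃ v, M.T v

/-- A Mauldin–Williams graph is totally disconnected if
`φ e '' K (r e)` and `φ g '' K (r g)` are disjoint whenever `e ≠ g`, `s e = s g`. -/
def TotallyDisconnected (M : MWGraph G X) : Prop :=
  ∀ e g : E, e ≠ g → G.s e = G.s g →
    Disjoint (M.φ e '' M.T (G.r e)) (M.φ g '' M.T (G.r g))

end MWGraph
namespace MWGraph

variable {V E : Type*} {G : DirGraph V E} {X : Type*} [MetricSpace X]

/-- `α : ℕ → E` is an infinite path in `G`: `r αᵢ = s αᵢ₊₁` for all `i`. -/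
def IsInfPath (G : DirGraph V E) (α : ℕ → E) : Prop :=
  ∀ i, G.r (α i) = G.s (α (i + 1))

/-- The composition `φ (α 0) ∘ φ (α 1) ∘ ⋯ ∘ φ (α n)` of the edge maps along
the first `n + 1` edges of the infinite path `α`. -/
def pathComp (M : MWGraph G X) (α : ℕ → E) : ℕ → X → X
  | 0 => M.φ (α 0)
  | n + 1 => pathComp M α n ∘ M.φ (α (n + 1))

/-- Prepending the edge `e` to the infinite path `α`: the map `θ_e (α) = e α`. -/
def consPath (e : E) (α : ℕ → E) : ℕ → E
  | 0 => e
  | n + 1 => α n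

end MWGraph

section Aux
namespace MWGraph
variable {V E : Type*} {G : DirGraph V E} {X : Type*} [MetricSpace X]

lemma c_pos (M : MWGraph G X) : 0 < M.c := M.c₁_pos.trans_le M.c₁_le_c

lemma φ_injOn (M : MWGraph G X) (e : E) : Set.InjOn (M.φ e) (M.T (G.r e)) := by
  intro x hx y hy h
  by_contra hne
  have h1 := M.lower e x hx y hy
  rw [h, dist_self] at h1
  have : 0 < M.c₁ * dist x y := mul_pos M.c₁_pos (dist_pos.mpr hne)
  linarith

lemma pathComp_mapsTo (M : MWGraph G X) {α : ℕ → E} (hα : IsInfPath G α) :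
    ∀ n, Set.MapsTo (M.pathComp α n) (M.T (G.r (α n))) (M.T (G.s (α 0)))
  | 0 => M.maps_to (α 0)
  | n + 1 => by
      intro x hx
      have hx' : M.φ (α (n + 1)) x ∈ M.T (G.r (α n)) := by
        rw [hα n]; exact M.maps_to (α (n + 1)) hx
      exact pathComp_mapsTo M hα n hx'

lemma pathComp_injOn (M : MWGraph G X) {α : ℕ → E} (hα : IsInfPath G α) :
    ∀ n, Set.InjOn (M.pathComp α n) (M.T (G.r (α n)))
  | 0 => M.φ_injOn (α 0)
  | n + 1 => by
      have h1 : Set.InjOn (M.φ (α (n + 1))) (M.T (G.r (α (n + 1)))) :=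
        M.φ_injOn (α (n + 1))
      have h2 : Set.MapsTo (M.φ (α (n + 1))) (M.T (G.r (α (n + 1)))) (M.T (G.r (α n))) := by
        rw [hα n]; exact M.maps_to (α (n + 1))
      exact (pathComp_injOn M hα n).comp h1 h2

lemma pathComp_dist_le (M : MWGraph G X) {α : ℕ → E} (hα : IsInfPath G α) :
    ∀ n, ∀ x ∈ M.T (G.r (α n)), ∀ y ∈ M.T (G.r (α n)),
      dist (M.pathComp α n x) (M.pathComp α n y) ≤ M.c ^ (n + 1) * dist x y
  | 0 => by
      intro x hx y hy
      simpa [pathComp] using M.upper (α 0) x hx y hy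
  | n + 1 => by
      intro x hx y hy
      have hx' : M.φ (α (n + 1)) x ∈ M.T (G.r (α n)) := by
        rw [hα n]; exact M.maps_to (α (n + 1)) hx
      have hy' : M.φ (α (n + 1)) y ∈ M.T (G.r (α n)) := by
        rw [hα n]; exact M.maps_to (α (n + 1)) hy
      have h1 := pathComp_dist_le M hα n _ hx' _ hy'
      have h2 := M.upper (α (n + 1)) x hx y hy
      calc dist (M.pathComp α (n + 1) x) (M.pathComp α (n + 1) y)
          = dist (M.pathComp α n (M.φ (α (n + 1)) x)) (M.pathComp α n (M.φ (α (n + 1)) y)) := rfl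
        _ ≤ M.c ^ (n + 1) * dist (M.φ (α (n + 1)) x) (M.φ (α (n + 1)) y) := h1
        _ ≤ M.c ^ (n + 1) * (M.c * dist x y) := by
            exact mul_le_mul_of_nonneg_left h2 (pow_nonneg M.c_pos.le _)
        _ = M.c ^ (n + 2) * dist x y := by ring

lemma pathComp_congr (M : MWGraph G X) {α β : ℕ → E} :
    ∀ n, (∀ i ≤ n, α i = β i) → M.pathComp α n = M.pathComp β n
  | 0 => fun h => by simp [pathComp, h 0 le_rfl]
  | n + 1 => fun h => by
      have h1 : M.pathComp α n = M.pathComp β n :=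
        pathComp_congr M n (fun i hi => h i (hi.trans (Nat.le_succ n)))
      show M.pathComp α n ∘ M.φ (α (n + 1)) = M.pathComp β n ∘ M.φ (β (n + 1))
      rw [h1, h (n + 1) le_rfl]

lemma KK_compact [Finite V] (M : MWGraph G X) : IsCompact M.KK :=
  isCompact_iUnion fun v => M.T_compact v

lemma T_subset_KK (M : MWGraph G X) (v : V) : M.T v ⊆ M.KK :=
  Set.subset_iUnion M.T v

/-- Two points lying in all the `pathComp` images along a path coincide. -/
lemma inter_unique [Finite V] (M : MWGraph G X) {α : ℕ → E} (hα : IsInfPath G α)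
    {x y : X} (hx : ∀ n, x ∈ M.pathComp α n '' M.T (G.r (α n)))
    (hy : ∀ n, y ∈ M.pathComp α n '' M.T (G.r (α n))) : x = y := by
  set D := Metric.diam M.KK with hD
  have hkey : ∀ n : ℕ, dist x y ≤ M.c ^ (n + 1) * D := by
    intro n
    obtain ⟨a, ha, hax⟩ := hx n
    obtain ⟨b, hb, hby⟩ := hy n
    have hab : dist a b ≤ D :=
      Metric.dist_le_diam_of_mem M.KK_compact.isBounded
        (M.T_subset_KK _ ha) (M.T_subset_KK _ hb)
    calc dist x y = dist (M.pathComp α n a) (M.pathComp α n b) := by rw [hax, hby]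
      _ ≤ M.c ^ (n + 1) * dist a b := M.pathComp_dist_le hα n a ha b hb
      _ ≤ M.c ^ (n + 1) * D := mul_le_mul_of_nonneg_left hab (pow_nonneg M.c_pos.le _)
  have htend : Filter.Tendsto (fun n : ℕ => M.c ^ (n + 1) * D) Filter.atTop (nhds 0) := by
    have h1 : Filter.Tendsto (fun n : ℕ => M.c ^ n) Filter.atTop (nhds 0) :=
      tendsto_pow_atTop_nhds_zero_of_lt_one M.c_pos.le M.c_lt_one
    have h2 := (h1.comp (Filter.tendsto_add_atTop_nat 1)).mul_const D
    simpa using h2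
  have : dist x y ≤ 0 := ge_of_tendsto' htend hkey
  exact dist_le_zero.mp this


end MWGraph
end Aux

/-- Let a Mauldin–Williams graph coincide with its invariant
list, with invariant set `K` and coding map `π : E^∞ → K`.  If the graph is
totally disconnected, then `π` is a homeomorphism from `E^∞` (subspace of the
product space `E^ℕ`, `E` discrete) onto `K`. -/
theorem MWGraph.codingMap_homeomorph {V E : Type*} [Fintype V] [Fintype E]
    [TopologicalSpace E] [DiscreteTopology E]
    {G : DirGraph V E} {X : Type*} [MetricSpace X] (M : MWGraph G X)
    (hM : M.SelfInvariant) (htd : M.TotallyDisconnected)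
    (π : (ℕ → E) → X)
    (hπ : ∀ α : ℕ → E, MWGraph.IsInfPath G α →
      π α ∈ ⋂ n : ℕ, M.pathComp α n '' M.T (G.r (α n))) :
    ∃ h : {α : ℕ → E // MWGraph.IsInfPath G α} ≃ₜ {x : X // x ∈ M.KK},
      ∀ α : {α : ℕ → E // MWGraph.IsInfPath G α}, (h α : X) = π α.1 := by
  classical
  -- basic membership facts
  have hmem : ∀ (α : ℕ → E), MWGraph.IsInfPath G α →
      ∀ n, π α ∈ M.pathComp α n '' M.T (G.r (α n)) := by
    intro α hα n
    exact Set.mem_iInter.mp (hπ α hα) n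
  have hmemT : ∀ (α : ℕ → E) (hα : MWGraph.IsInfPath G α), π α ∈ M.T (G.s (α 0)) := by
    intro α hα
    obtain ⟨a, ha, hax⟩ := hmem α hα 0
    rw [← hax]
    exact M.maps_to (α 0) ha
  have hmemK : ∀ (α : ℕ → E) (hα : MWGraph.IsInfPath G α), π α ∈ M.KK := by
    intro α hα
    exact M.T_subset_KK _ (hmemT α hα)
  set p : {α : ℕ → E // MWGraph.IsInfPath G α} → {x : X // x ∈ M.KK} :=
    fun α => ⟨π α.1, hmemK α.1 α.2⟩ with hp
  -- injectivity
  have hinj : Function.Injective p := by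
    rintro ⟨α, hα⟩ ⟨β, hβ⟩ h
    have hpi : π α = π β := congrArg Subtype.val h
    have key : ∀ n, (∀ i < n, α i = β i) → α n = β n := by
      intro n hpre
      by_contra hne
      rcases n with _ | m
      · -- n = 0
        have hs : G.s (α 0) = G.s (β 0) := by
          by_contra hsne
          exact Set.disjoint_left.mp (M.T_disjoint _ _ hsne) (hmemT α hα)
            (hpi ▸ hmemT β hβ)
        have hdisj := htd (α 0) (β 0) hne hs
        have h1 : π α ∈ M.φ (α 0) '' M.T (G.r (α 0)) := by
          simpa [MWGraph.pathComp] using hmem α hα 0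
        have h2 : π α ∈ M.φ (β 0) '' M.T (G.r (β 0)) := by
          rw [hpi]; simpa [MWGraph.pathComp] using hmem β hβ 0
        exact Set.disjoint_left.mp hdisj h1 h2
      · -- n = m + 1
        have hprem : ∀ i ≤ m, α i = β i := fun i hi => hpre i (Nat.lt_succ_of_le hi)
        have hAm : α m = β m := hprem m le_rfl
        obtain ⟨a, ha, hax⟩ := hmem α hα (m + 1)
        obtain ⟨b, hb, hbx⟩ := hmem β hβ (m + 1)
        -- peel off the common prefix
        have hax' : M.pathComp α m (M.φ (α (m + 1)) a) = π α := hax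
        have hbx' : M.pathComp β m (M.φ (β (m + 1)) b) = π β := hbx
        rw [← M.pathComp_congr m hprem] at hbx'
        set x := M.φ (α (m + 1)) a with hxdef
        set y := M.φ (β (m + 1)) b with hydef
        have hxmem : x ∈ M.T (G.r (α m)) := by
          rw [hα m]; exact M.maps_to (α (m + 1)) ha
        have hymem : y ∈ M.T (G.r (α m)) := by
          rw [hAm, hβ m]; exact M.maps_to (β (m + 1)) hb
        have hxy : x = y := by
          apply M.pathComp_injOn hα m hxmem hymem
          rw [hax', hbx', hpi]
        have hs : G.s (α (m + 1)) = G.s (β (m + 1)) := by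
          rw [← hα m, ← hβ m, hAm]
        have hdisj := htd (α (m + 1)) (β (m + 1)) hne hs
        exact Set.disjoint_left.mp hdisj ⟨a, ha, rfl⟩
          (hxy ▸ ⟨b, hb, rfl⟩ : x ∈ M.φ (β (m + 1)) '' M.T (G.r (β (m + 1))))
    have : α = β := by
      funext n
      induction n using Nat.strong_induction_on with
      | _ n ih => exact key n ih
    subst this
    rfl
  -- surjectivity
  have hsurj : Function.Surjective p := by
    rintro ⟨x, hx⟩
    obtain ⟨v, hv⟩ := Set.mem_iUnion.mp hx
    -- choice: decompose a point of `T v` via the self-invariance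
    have hchoice : ∀ q : Σ v : V, {x : X // x ∈ M.T v},
        ∃ r : E × X, G.s r.1 = q.1 ∧ r.2 ∈ M.T (G.r r.1) ∧ M.φ r.1 r.2 = q.2.1 := by
      rintro ⟨w, y, hy⟩
      rw [hM w] at hy
      simp only [Set.mem_iUnion, Set.mem_setOf_eq, Set.mem_image] at hy
      obtain ⟨e, he, z, hz, hez⟩ := hy
      exact ⟨(e, z), he, hz, hez⟩
    choose F hF1 hF2 hF3 using hchoice
    set st : ℕ → Σ v : V, {x : X // x ∈ M.T v} :=
      fun n => Nat.rec (⟨v, x, hv⟩ : Σ v : V, {x : X // x ∈ M.T v})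
        (fun _ q => ⟨G.r (F q).1, (F q).2, hF2 q⟩) n with hst
    have hst0 : st 0 = ⟨v, x, hv⟩ := rfl
    have hstS : ∀ n, st (n + 1) = ⟨G.r (F (st n)).1, (F (st n)).2, hF2 (st n)⟩ :=
      fun n => rfl
    set α : ℕ → E := fun n => (F (st n)).1 with hαdef
    have hfst : ∀ n, (st (n + 1)).1 = G.r (α n) := fun n => rfl
    have hα : MWGraph.IsInfPath G α := by
      intro n
      have := hF1 (st (n + 1))
      rw [hfst n] at this
      exact this.symm
    -- x lies in all pathComp images
    have hxmem : ∀ n, (st (n + 1)).2.1 ∈ M.T (G.r (α n)) := by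
      intro n
      exact (st (n + 1)).2.2
    have hxval : ∀ n, M.pathComp α n ((st (n + 1)).2.1) = x := by
      intro n
      induction n with
      | zero =>
        show M.φ (α 0) ((F (st 0)).2) = x
        have := hF3 (st 0)
        rw [hst0] at this ⊢
        exact this
      | succ m ih =>
        show M.pathComp α m (M.φ (α (m + 1)) ((F (st (m + 1))).2)) = x
        have h3 := hF3 (st (m + 1))
        rw [show M.φ (α (m + 1)) ((F (st (m + 1))).2) = (st (m + 1)).2.1 from h3]
        exact ih
    have hxin : ∀ n, x ∈ M.pathComp α n '' M.T (G.r (α n)) :=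
      fun n => ⟨(st (n + 1)).2.1, hxmem n, hxval n⟩
    refine ⟨⟨α, hα⟩, ?_⟩
    have : π α = x := M.inter_unique hα (hmem α hα) hxin
    simp only [hp]
    exact Subtype.ext this
  -- continuity
  have hD : Filter.Tendsto (fun n : ℕ => M.c ^ (n + 1) * Metric.diam M.KK)
      Filter.atTop (nhds 0) := by
    have h1 : Filter.Tendsto (fun n : ℕ => M.c ^ n) Filter.atTop (nhds 0) :=
      tendsto_pow_atTop_nhds_zero_of_lt_one M.c_pos.le M.c_lt_one
    have h2 := (h1.comp (Filter.tendsto_add_atTop_nat 1)).mul_const (Metric.diam M.KK)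
    simpa using h2
  have hcont : Continuous p := by
    rw [continuous_iff_continuousAt]
    intro α₀
    rw [ContinuousAt, Metric.tendsto_nhds]
    intro ε hε
    obtain ⟨n, hn⟩ := (hD.eventually (eventually_lt_nhds hε)).exists
    have hUopen : IsOpen ((fun (β : ℕ → E) (i : Fin (n + 1)) => β i) ⁻¹'
        {fun i : Fin (n + 1) => α₀.1 i}) := by
      apply IsOpen.preimage
      · exact continuous_pi fun i => continuous_apply (i : ℕ)
      · exact isOpen_discrete _
    have hUmem : α₀.1 ∈ (fun (β : ℕ → E) (i : Fin (n + 1)) => β i) ⁻¹'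
        {fun i : Fin (n + 1) => α₀.1 i} := rfl
    have hev : ∀ᶠ β : {α : ℕ → E // MWGraph.IsInfPath G α} in nhds α₀,
        β.1 ∈ (fun (β : ℕ → E) (i : Fin (n + 1)) => β i) ⁻¹'
          {fun i : Fin (n + 1) => α₀.1 i} :=
      (continuous_subtype_val.tendsto α₀).eventually (hUopen.mem_nhds hUmem)
    filter_upwards [hev] with β hβU
    have hpre : ∀ i ≤ n, β.1 i = α₀.1 i := by
      intro i hi
      have := congrFun hβU ⟨i, Nat.lt_succ_of_le hi⟩
      exact this
    -- both π β and π α₀ lie in pathComp α₀ n '' T (r (α₀ n))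
    have h1 : π β.1 ∈ M.pathComp α₀.1 n '' M.T (G.r (α₀.1 n)) := by
      have := hmem β.1 β.2 n
      rwa [M.pathComp_congr n hpre, hpre n le_rfl] at this
    have h2 := hmem α₀.1 α₀.2 n
    obtain ⟨a, ha, hax⟩ := h1
    obtain ⟨b, hb, hbx⟩ := h2
    have hab : dist a b ≤ Metric.diam M.KK :=
      Metric.dist_le_diam_of_mem M.KK_compact.isBounded
        (M.T_subset_KK _ ha) (M.T_subset_KK _ hb)
    rw [Subtype.dist_eq]
    calc dist (p β : X) (p α₀ : X)
        = dist (M.pathComp α₀.1 n a) (M.pathComp α₀.1 n b) := by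
          simp only [hp]; rw [hax, hbx]
      _ ≤ M.c ^ (n + 1) * dist a b := M.pathComp_dist_le α₀.2 n a ha b hb
      _ ≤ M.c ^ (n + 1) * Metric.diam M.KK :=
          mul_le_mul_of_nonneg_left hab (pow_nonneg M.c_pos.le _)
      _ < ε := hn
  -- compactness of the path space
  have hcl : IsClosed {α : ℕ → E | MWGraph.IsInfPath G α} := by
    have hset : {α : ℕ → E | MWGraph.IsInfPath G α} =
        ⋂ i : ℕ, (fun α : ℕ → E => (α i, α (i + 1))) ⁻¹'
          {q : E × E | G.r q.1 = G.s q.2} := by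
      ext α
      simp [MWGraph.IsInfPath, Set.mem_iInter]
    rw [hset]
    exact isClosed_iInter fun i => (isClosed_discrete _).preimage
      ((continuous_apply i).prodMk (continuous_apply (i + 1)))
  haveI : CompactSpace {α : ℕ → E // MWGraph.IsInfPath G α} :=
    isCompact_iff_compactSpace.mp hcl.isCompact
  exact ⟨hcont.homeoOfEquivCompactToT2 (f := Equiv.ofBijective p ⟨hinj, hsurj⟩),
    fun α => rfl⟩
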